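/- arXiv:math/0605546 — 4 statements merged into one kernel-verified Lean document; each statement's English description precedes it below -/
import Mathlib

section
/- If a group G virtually retracts onto every finitely generated subgroup (i.e. G has local retractions) and H is a subgroup of G, then H has local retractions. -/
/-- `G` virtually retracts onto the subgroup `H`: there is a finite-index subgroup
`K` containing `H` and a retraction `K → H` (a homomorphism with image in `H`
restricting to the identity on `H`). -/
def VirtuallyRetractsOnto {G : Type*} [Group G] (H : Subgroup G) : Prop :=
  ∃ K : Subgroup G, K.FiniteIndex ∧ H ≤ K ∧
    ∃ ρ : K →* G, (∀ k : K, ρ k ∈ H) ∧ (∀ k : K, (k : G) ∈ H → ρ k = k)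

/-- `G` has local retractions: it virtually retracts onto each finitely generated
subgroup. -/
def HasLocalRetractions (G : Type*) [Group G] : Prop :=
  ∀ H : Subgroup G, H.FG → VirtuallyRetractsOnto H

private theorem subgroupFG_map {G G' : Type*} [Group G] [Group G'] {L : Subgroup G}
    (h : L.FG) (f : G →* G') : (L.map f).FG := by
  rw [Subgroup.fg_iff] at h ⊢
  obtain ⟨S, hS, hfin⟩ := h
  exact ⟨f '' S, by rw [← hS, MonoidHom.map_closure], hfin.image f⟩

/-- Local retractions pass to subgroups. -/
theorem hasLocalRetractions_of_subgroup {G : Type*} [Group G]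
    (hG : HasLocalRetractions G) (H : Subgroup G) :
    HasLocalRetractions H := by
  intro L hL
  obtain ⟨K, hKfi, hLK, ρ, hρmem, hρid⟩ := hG (L.map H.subtype) (subgroupFG_map hL H.subtype)
  refine ⟨K.subgroupOf H, ?_, ?_, ?_⟩
  · exact Subgroup.instFiniteIndex_subgroupOf K H
  · intro x hx
    exact hLK ⟨x, hx, rfl⟩
  · have hmemH : ∀ k : K.subgroupOf H, ρ ⟨(k : H), k.2⟩ ∈ H := by
      intro k
      obtain ⟨l, _, hl⟩ := hρmem ⟨(k : H), k.2⟩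
      exact hl ▸ l.2
    refine ⟨{ toFun := fun k => ⟨ρ ⟨(k : H), k.2⟩, hmemH k⟩
              map_one' := ?_
              map_mul' := ?_ }, ?_, ?_⟩
    · ext; exact map_one ρ
    · intro a b; ext; exact map_mul ρ ⟨(a : H), a.2⟩ ⟨(b : H), b.2⟩
    · intro k
      obtain ⟨l, hlL, hl⟩ := hρmem ⟨(k : H), k.2⟩
      have : (⟨ρ ⟨(k : H), k.2⟩, hmemH k⟩ : H) = l := by
        ext; exact hl.symm
      simpa [this] using hlL
    · intro k hk
      have hG : ρ ⟨(k : H), k.2⟩ = ((k : H) : G) :=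
        hρid ⟨(k : H), k.2⟩ ⟨(k : H), hk, rfl⟩
      ext
      exact hG
end

section
/- Every finitely generated abelian group has local retractions: for every finitely generated subgroup H of a finitely generated abelian group G there is a finite-index subgroup K of G containing H and a retraction K → H. -/
/-!
Write `G` additively, as a finitely generated `ℤ`-module `M` with submodule `N`. The saturation
`N'` of `N` (the kernel of `M → (M ⧸ N) ⧸ torsion`) has torsion-free, hence free, quotient, so
`M = N' ⊕ F` for the image `F` of a section. On `K = N + F` the projection onto `N'` along `F`
lands in `N` and fixes `N`, and `M ⧸ K ≅ N' ⧸ N` is finitely generated torsion, hence finite.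
-/

namespace Submodule

variable {R M P : Type*} [CommRing R] [AddCommGroup M] [Module R M] [AddCommGroup P] [Module R P]
  {N : Submodule R M} {φ : M →ₗ[R] P} {s : P →ₗ[R] M}

theorem sub_map_comp_mem_of_mem_sup_range (hN : N ≤ LinearMap.ker φ) (hs : ∀ p, φ (s p) = p)
    {k : M} (hk : k ∈ N ⊔ LinearMap.range s) : k - s (φ k) ∈ N := by
  obtain ⟨n, hn, _, ⟨p, rfl⟩, rfl⟩ := mem_sup.1 hk
  simpa [LinearMap.mem_ker.1 (hN hn), hs] using hn

theorem isTorsion_quotient_sup_range (hs : ∀ p, φ (s p) = p)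
    (hsat : ∀ m ∈ LinearMap.ker φ, ∃ a : nonZeroDivisors R, a • m ∈ N) :
    Module.IsTorsion R (M ⧸ N ⊔ LinearMap.range s) := by
  intro x
  induction x using Submodule.Quotient.induction_on with | H m => ?_
  obtain ⟨a, ha⟩ := hsat (m - s (φ m)) (by simp [hs])
  refine ⟨a, (Submodule.Quotient.mk_eq_zero _).2 ?_⟩
  have hdecomp : (a : R) • m = a • (m - s (φ m)) + s ((a : R) • φ m) := by
    simp [smul_sub, Submonoid.smul_def]
  show (a : R) • m ∈ _
  rw [hdecomp]
  exact add_mem (mem_sup_left ha) (mem_sup_right ⟨_, rfl⟩)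

end Submodule

theorem Submodule.exists_isTorsion_quotient_retraction {R M : Type*} [CommRing R] [IsDomain R]
    [IsPrincipalIdealRing R] [AddCommGroup M] [Module R M] [Module.Finite R M]
    (N : Submodule R M) :
    ∃ K : Submodule R M, N ≤ K ∧ Module.IsTorsion R (M ⧸ K) ∧
      ∃ π : M →ₗ[R] M, (∀ k ∈ K, π k ∈ N) ∧ ∀ n ∈ N, π n = n := by
  set φ := (torsion R (M ⧸ N)).mkQ ∘ₗ N.mkQ
  have hN : N ≤ LinearMap.ker φ := fun n hn => by simp [φ, (Quotient.mk_eq_zero N).2 hn]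
  have hsat : ∀ m ∈ LinearMap.ker φ, ∃ a : nonZeroDivisors R, a • m ∈ N := fun m hm => by
    simpa [φ, mem_torsion_iff, ← Quotient.mk_smul, Quotient.mk_eq_zero] using hm
  -- `(M ⧸ N) ⧸ torsion` is finite and torsion-free over a PID, hence free, so `φ` splits.
  obtain ⟨s, hs⟩ := φ.exists_rightInverse_of_surjective
    (LinearMap.range_eq_top.2 ((torsion R (M ⧸ N)).mkQ_surjective.comp N.mkQ_surjective))
  have hs' : ∀ p, φ (s p) = p := fun p => congr($hs p)
  refine ⟨N ⊔ LinearMap.range s, le_sup_left, isTorsion_quotient_sup_range hs' hsat,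
    LinearMap.id - s ∘ₗ φ, fun k hk => sub_map_comp_mem_of_mem_sup_range hN hs' hk,
    fun n hn => by simp [LinearMap.mem_ker.1 (hN hn)]⟩

theorem AddSubgroup.exists_finiteIndex_retraction {M : Type*} [AddCommGroup M] [AddGroup.FG M]
    (N : AddSubgroup M) :
    ∃ K : AddSubgroup M, K.FiniteIndex ∧ N ≤ K ∧
      ∃ π : M →+ M, (∀ k ∈ K, π k ∈ N) ∧ ∀ n ∈ N, π n = n := by
  obtain ⟨K, hNK, htors, π, hπK, hπN⟩ := N.toIntSubmodule.exists_isTorsion_quotient_retraction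
  have : Finite (M ⧸ K.toAddSubgroup) := Module.finite_of_fg_torsion (M ⧸ K) htors
  exact ⟨K.toAddSubgroup, K.toAddSubgroup.finiteIndex_of_finite_quotient, hNK,
    π.toAddMonoidHom, hπK, hπN⟩

theorem Subgroup.exists_finiteIndex_retraction {G : Type*} [CommGroup G] [Group.FG G]
    (H : Subgroup G) :
    ∃ K : Subgroup G, K.FiniteIndex ∧ H ≤ K ∧
      ∃ π : G →* G, (∀ k ∈ K, π k ∈ H) ∧ ∀ h ∈ H, π h = h := by
  obtain ⟨K, hK, hHK, π, hπK, hπH⟩ := H.toAddSubgroup.exists_finiteIndex_retraction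
  exact ⟨Subgroup.toAddSubgroup.symm K, finiteIndex_toAddSubgroup_iff.1 hK, hHK,
    MonoidHom.toAdditive.symm π, hπK, hπH⟩

theorem VirtuallyRetractsOnto.of_retraction {G : Type*} [Group G] {H K : Subgroup G}
    (hK : K.FiniteIndex) (hHK : H ≤ K) (π : G →* G) (hπK : ∀ k ∈ K, π k ∈ H)
    (hπH : ∀ h ∈ H, π h = h) : VirtuallyRetractsOnto H :=
  ⟨K, hK, hHK, π.comp K.subtype, fun k => hπK k k.2, fun _ hk => hπH _ hk⟩

/-- Every finitely generated abelian group has local retractions. -/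
theorem fg_abelian_hasLocalRetractions (G : Type*) [CommGroup G] (hG : Group.FG G) :
    HasLocalRetractions G := fun H _ =>
  have ⟨_, hK, hHK, π, hπK, hπH⟩ := H.exists_finiteIndex_retraction
  .of_retraction hK hHK π hπK hπH
end

section
/- Let G be a group with local retractions and let δ ∈ G be an element of infinite order. Then for every positive integer d there exists a finite-index subgroup K of G such that δ^d ∈ K, δ^k ∉ K for 0 < k < d, and there is a retraction from K onto ⟨δ^d⟩. -/
/-!
Apply local retractions to the cyclic group `⟨δ⟩` to get a retraction `ρ₀ : K₀ → ⟨δ⟩`, and let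
`K = ρ₀⁻¹⟨δ^d⟩`; it has finite index since `⟨δ^d⟩` has index `d` in `⟨δ⟩`, and `ρ₀` restricts to a
retraction `ρ : K → ⟨δ^d⟩`. If `δ^k ∈ K` then `ρ(δ^k)^d = ρ(δ^(kd)) = δ^(kd)`, which for `δ` of
infinite order forces `d ∣ k`.
-/

open Subgroup

section

variable {G : Type*} [Group G]

theorem Subgroup.relIndex_zpowers_pow_ne_zero (g : G) {n : ℕ} (hn : n ≠ 0) :
    (zpowers (g ^ n)).relIndex (zpowers g) ≠ 0 := by
  rw [← range_zpowersHom g, MonoidHom.range_eq_map, ← relIndex_comap, relIndex_top_right]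
  have hle : AddSubgroup.toSubgroup (AddSubgroup.zmultiples (n : ℤ)) ≤
      (zpowers (g ^ n)).comap (zpowersHom G g) := by
    rintro x ⟨k, hk⟩
    refine ⟨k, ?_⟩
    rw [zpowersHom_apply, ← hk]
    dsimp only
    rw [smul_eq_mul, mul_comm, zpow_mul, zpow_natCast]
  refine ne_zero_of_dvd_ne_zero ?_ (index_dvd_of_le hle)
  simpa [AddSubgroup.index_toSubgroup, Int.index_zmultiples] using hn

theorem VirtuallyRetractsOnto.of_le {H L : Subgroup G} (hH : VirtuallyRetractsOnto H)
    (hLH : L ≤ H) (hL : L.relIndex H ≠ 0) : VirtuallyRetractsOnto L := by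
  obtain ⟨K₀, hK₀, hHK₀, ρ₀, hρ₀H, hρ₀id⟩ := hH
  have hrange : ρ₀.range ≤ H := by
    rintro _ ⟨x, rfl⟩
    exact hρ₀H x
  set K := (L.comap ρ₀).map K₀.subtype
  have hKK₀ : K ≤ K₀ := map_subtype_le _
  refine ⟨K, ⟨?_⟩, fun x hx => ?_, ρ₀.comp (inclusion hKK₀), fun x => ?_, fun x hx => ?_⟩
  · rw [index_map_subtype, index_comap]
    exact mul_ne_zero (mt (relIndex_eq_zero_of_le_right hrange) hL) hK₀.index_ne_zero
  · have hxK₀ : x ∈ K₀ := hHK₀ (hLH hx)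
    refine ⟨⟨x, hxK₀⟩, ?_, rfl⟩
    show ρ₀ _ ∈ L
    rw [hρ₀id _ (hLH hx)]
    exact hx
  · obtain ⟨y, hy, hyx⟩ := x.2
    have hxy : inclusion hKK₀ x = y := Subtype.ext hyx.symm
    rw [MonoidHom.comp_apply, hxy]
    exact hy
  · exact hρ₀id _ (hLH hx)

theorem dvd_of_pow_mem_of_retraction {δ : G} (hδ : ¬IsOfFinOrder δ) {d : ℕ} (hd : d ≠ 0)
    {K : Subgroup G} {ρ : K →* G} (hρ : ∀ x : K, ρ x ∈ zpowers (δ ^ d))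
    (hρid : ∀ x : K, (x : G) ∈ zpowers (δ ^ d) → ρ x = x) {k : ℕ} (hk : δ ^ k ∈ K) : d ∣ k := by
  set x : K := ⟨δ ^ k, hk⟩
  obtain ⟨m, hm : (δ ^ d) ^ m = ρ x⟩ := hρ x
  have hxd : ((x ^ d : K) : G) = (δ ^ d) ^ k := by simp [x, ← pow_mul, mul_comm]
  have hpow : (δ ^ d) ^ (m * d) = (δ ^ d) ^ (k : ℤ) := by
    rw [zpow_mul, hm, zpow_natCast, ← map_pow, hρid _ ⟨k, by simp [hxd]⟩, hxd, zpow_natCast]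
  have hinj := injective_zpow_iff_not_isOfFinOrder.mpr fun h => hδ (h.of_pow hd)
  exact Int.natCast_dvd_natCast.mp (Dvd.intro_left m (hinj hpow))

end

/-- If `G` has local retractions and `δ ∈ G` has infinite order, then for every
`d > 0` there is a finite-index subgroup `K ≤ G` with `δ^d ∈ K`, `δ^k ∉ K` for
`0 < k < d`, and a retraction from `K` onto `⟨δ^d⟩`. -/
theorem controlled_cover_of_localRetractions {G : Type*} [Group G]
    (hG : HasLocalRetractions G) (δ : G) (hδ : ¬ IsOfFinOrder δ)
    (d : ℕ) (hd : 0 < d) :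
    ∃ K : Subgroup G, K.FiniteIndex ∧ δ ^ d ∈ K ∧
      (∀ k : ℕ, 0 < k → k < d → δ ^ k ∉ K) ∧
      ∃ ρ : K →* G,
        (∀ x : K, ρ x ∈ Subgroup.zpowers (δ ^ d)) ∧
        (∀ x : K, (x : G) ∈ Subgroup.zpowers (δ ^ d) → ρ x = x) := by
  have hfg : (zpowers δ).FG := ⟨{δ}, by simp [zpowers_eq_closure]⟩
  obtain ⟨K, hK, hδK, ρ, hρ, hρid⟩ := (hG _ hfg).of_le
    (zpowers_le.mpr (pow_mem (mem_zpowers δ) d)) (relIndex_zpowers_pow_ne_zero δ hd.ne')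
  refine ⟨K, hK, hδK (mem_zpowers _), fun k hk hkd hδk => ?_, ρ, hρ, hρid⟩
  exact hkd.not_ge (Nat.le_of_dvd hk (dvd_of_pow_mem_of_retraction hδ hd.ne' hρ hρid hδk))
end

section
/- If G retracts onto a subgroup H (there is a homomorphism ρ : G → H with ρ|_H = id) and G is finitely presented while H is finitely generated, then ker ρ is normally finitely generated in G; moreover G is isomorphic to the semidirect product ker ρ ⋊ H. -/
/-- `G` is finitely presented: it is the quotient of a finitely generated free
group by the normal closure of finitely many relators. -/
def IsFinitelyPresentedGroup (G : Type*) [Group G] : Prop :=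
  ∃ (n : ℕ) (R : Finset (FreeGroup (Fin n))) (φ : FreeGroup (Fin n) →* G),
    Function.Surjective φ ∧ φ.ker = Subgroup.normalClosure (R : Set (FreeGroup (Fin n)))

/-!
Write `N` for the normal closure of the elements `s (ρ s)⁻¹`, `s` running over a finite
generating set of `G`. Modulo `N`, the homomorphisms `id` and `ρ` agree on the generators,
hence everywhere, so every `g ∈ ker ρ` is trivial in `G ⧸ N`. The factorisation is
`g = (g (ρ g)⁻¹) · ρ g`; it is unique because `ker ρ ∩ H = 1`, as `ρ` fixes `H`.
-/

theorem IsFinitelyPresentedGroup.fg {G : Type*} [Group G] (hG : IsFinitelyPresentedGroup G) :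
    Group.FG G := by
  obtain ⟨n, -, φ, hφ, -⟩ := hG
  exact Group.fg_of_surjective hφ

namespace MonoidHom

variable {G : Type*} [Group G] {ρ : G →* G}

theorem ker_eq_normalClosure_of_idempotent (hρ : ∀ g, ρ (ρ g) = ρ g) {S : Set G}
    (hS : Subgroup.closure S = ⊤) :
    ρ.ker = Subgroup.normalClosure ((fun s => s / ρ s) '' S) := by
  set N := Subgroup.normalClosure ((fun s => s / ρ s) '' S)
  refine le_antisymm (fun g hg => ?_) (Subgroup.normalClosure_le_normal ?_)
  · have hπ : QuotientGroup.mk' N = (QuotientGroup.mk' N).comp ρ :=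
      eq_of_eqOn_dense hS fun s hs => QuotientGroup.eq_iff_div_mem.2 <|
        Subgroup.subset_normalClosure ⟨s, hs, rfl⟩
    have := DFunLike.congr_fun hπ g
    rwa [comp_apply, mem_ker.1 hg, map_one, QuotientGroup.mk'_apply,
      QuotientGroup.eq_one_iff] at this
  · rintro _ ⟨s, -, rfl⟩
    simp [hρ]

theorem exists_finset_normalClosure_eq_ker [Group.FG G] (hρ : ∀ g, ρ (ρ g) = ρ g) :
    ∃ F : Finset G, Subgroup.normalClosure (F : Set G) = ρ.ker := by
  classical
  obtain ⟨S, hS⟩ := Group.fg_def.1 ‹_›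
  exact ⟨S.image fun s => s / ρ s, by
    rw [Finset.coe_image, ker_eq_normalClosure_of_idempotent hρ hS]⟩

theorem isComplement'_ker_of_retraction {H : Subgroup G} (hρ1 : ∀ g, ρ g ∈ H)
    (hρ2 : ∀ h ∈ H, ρ h = h) : ρ.ker.IsComplement' H := by
  refine Subgroup.isComplement'_of_disjoint_and_mul_eq_univ ?_ ?_
  · refine Subgroup.disjoint_def.2 fun {h} hker hH => ?_
    rw [← hρ2 h hH, mem_ker.1 hker]
  · refine Set.eq_univ_of_forall fun g => ⟨g / ρ g, ?_, ρ g, hρ1 g, div_mul_cancel g (ρ g)⟩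
    simp [hρ2 _ (hρ1 g)]

end MonoidHom

theorem retraction_semidirect_decomposition_general {G : Type*} [Group G]
    (hG : IsFinitelyPresentedGroup G) (H : Subgroup G)
    (ρ : G →* G) (hρ1 : ∀ g : G, ρ g ∈ H) (hρ2 : ∀ h ∈ H, ρ h = h) :
    (∃ F : Finset G, Subgroup.normalClosure (F : Set G) = ρ.ker) ∧
      ∀ g : G, ∃! p : ρ.ker × H, g = (p.1 : G) * (p.2 : G) := by
  have := hG.fg
  refine ⟨ρ.exists_finset_normalClosure_eq_ker fun g => hρ2 _ (hρ1 g), fun g => ?_⟩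
  obtain ⟨p, hp, hunique⟩ := (ρ.isComplement'_ker_of_retraction hρ1 hρ2).existsUnique g
  exact ⟨p, hp.symm, fun q hq => hunique q hq.symm⟩

/-- If `G` retracts onto a subgroup `H` via `ρ`, `G` is finitely presented and `H`
is finitely generated, then `ker ρ` is normally finitely generated in `G`, and
`G ≅ ker ρ ⋊ H`: every `g ∈ G` factors uniquely as `g = n · h` with `n ∈ ker ρ`
and `h ∈ H`. -/
theorem retraction_semidirect_decomposition {G : Type*} [Group G]
    (hG : IsFinitelyPresentedGroup G) (H : Subgroup G) (hH : H.FG)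
    (ρ : G →* G) (hρ1 : ∀ g : G, ρ g ∈ H) (hρ2 : ∀ h ∈ H, ρ h = h) :
    (∃ F : Finset G, Subgroup.normalClosure (F : Set G) = ρ.ker) ∧
      ∀ g : G, ∃! p : ρ.ker × H, g = (p.1 : G) * (p.2 : G) :=
  retraction_semidirect_decomposition_general hG H ρ hρ1 hρ2
end
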